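/- arXiv:2105.07309 — 2 statements merged into one kernel-verified Lean document; each statement's English description precedes it below -/
import Mathlib

section
/- If the kernel γ is nonnegative and all quadrature weights are nonnegative, the meshfree stiffness matrix A is weakly diagonally dominant with nonnegative diagonal entries: [A]_{ii} ≥ Σ_{j≠i} |[A]_{ij}| for all i, and hence A is positive semidefinite. -/
/-!
With `W i j = 2 γ(x_i, x_j) ω_i ω_j` and `c i = 2 ∑_k γ(x_i, x_k^Γ) ω_i ω_k^Γ`, the stiffness matrix
is the weighted graph Laplacian `diag(W 𝟙) - W` plus the diagonal `diag c`. For nonnegative `W`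
and `c` the off-diagonal row sums `∑_{j ≠ i} |A i j| = ∑_{j ≠ i} W i j` fall short of `A i i` by
exactly `c i ≥ 0`. As `A` is symmetric its eigenvalues are real, and Gershgorin's circle theorem
places each of them within `∑_{j ≠ k} |A k j| ≤ A k k` of some diagonal entry `A k k`, hence in
`[0, ∞)`.
-/

open Matrix

namespace Matrix

variable {n R : Type*} [Fintype n] [DecidableEq n]

section Laplacian

variable [AddCommGroup R]

def laplacian (W : Matrix n n R) : Matrix n n R :=
  diagonal (fun i => ∑ j, W i j) - W

theorem laplacian_apply_of_ne (W : Matrix n n R) {i j : n} (h : i ≠ j) :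
    laplacian W i j = -W i j := by
  simp [laplacian, h]

theorem laplacian_apply_self (W : Matrix n n R) (i : n) :
    laplacian W i i = ∑ j ∈ Finset.univ.erase i, W i j := by
  rw [laplacian, sub_apply, diagonal_apply_eq, ← Finset.add_sum_erase _ _ (Finset.mem_univ i),
    add_sub_cancel_left]

theorem isSymm_laplacian {W : Matrix n n R} (hW : W.IsSymm) : (laplacian W).IsSymm := by
  ext i j
  rcases eq_or_ne i j with rfl | h
  · rfl
  · rw [transpose_apply, laplacian_apply_of_ne W h, laplacian_apply_of_ne W h.symm, hW.apply]

theorem sum_abs_offDiag_le_laplacian_add_diagonal [LinearOrder R] [IsOrderedAddMonoid R]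
    {W : Matrix n n R} {c : n → R} (hW : ∀ i j, 0 ≤ W i j) (hc : 0 ≤ c) (i : n) :
    ∑ j ∈ Finset.univ.erase i, |(laplacian W + diagonal c) i j| ≤
      (laplacian W + diagonal c) i i := by
  have hoff : ∀ j ∈ Finset.univ.erase i, |(laplacian W + diagonal c) i j| = W i j := by
    intro j hj
    have hij : i ≠ j := (Finset.ne_of_mem_erase hj).symm
    rw [add_apply, laplacian_apply_of_ne W hij, diagonal_apply_ne c hij, add_zero, abs_neg,
      abs_of_nonneg (hW i j)]
  rw [Finset.sum_congr rfl hoff, add_apply, laplacian_apply_self, diagonal_apply_eq]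
  exact le_add_of_nonneg_right (hc i)

end Laplacian

open scoped ComplexOrder in
theorem IsHermitian.posSemidef_of_sum_norm_offDiag_le [RCLike R] {A : Matrix n n R}
    (hA : A.IsHermitian) (hdom : ∀ i, ∑ j ∈ Finset.univ.erase i, ‖A i j‖ ≤ RCLike.re (A i i)) :
    A.PosSemidef := by
  refine hA.posSemidef_iff_eigenvalues_nonneg.mpr fun i => ?_
  have hμ : Module.End.HasEigenvalue (toLin' A) (hA.eigenvalues i : R) := by
    refine Module.End.HasEigenvalue.of_mem_spectrum ?_
    rw [spectrum_toLin', ← RCLike.algebraMap_eq_ofReal, spectrum.algebraMap_mem_iff]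
    exact hA.eigenvalues_mem_spectrum_real i
  obtain ⟨k, hk⟩ := eigenvalue_mem_ball hμ
  rw [mem_closedBall_iff_norm'] at hk
  have hre := (RCLike.re_le_norm (A k k - hA.eigenvalues i)).trans (hk.trans (hdom k))
  rw [map_sub, RCLike.ofReal_re] at hre
  rw [Pi.zero_apply]
  linarith

end Matrix

/-- If the kernel `γ` is nonnegative (and symmetric) and the quadrature weights are
nonnegative, the meshfree stiffness matrix `A` is weakly diagonally dominant with
nonnegative diagonal entries, and hence positive semidefinite. -/
theorem meshfree_stiffness_diag_dominant_posSemidef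
    {d s b : ℕ}
    (γ : EuclideanSpace ℝ (Fin d) → EuclideanSpace ℝ (Fin d) → ℝ)
    (hγsymm : ∀ x y, γ x y = γ y x) (hγnonneg : ∀ x y, 0 ≤ γ x y)
    (x : Fin s → EuclideanSpace ℝ (Fin d)) (xΓ : Fin b → EuclideanSpace ℝ (Fin d))
    (ω : Fin s → ℝ) (ωΓ : Fin b → ℝ)
    (hω : ∀ i, 0 ≤ ω i) (hωΓ : ∀ i, 0 ≤ ωΓ i)
    (A : Matrix (Fin s) (Fin s) ℝ)
    (hA : ∀ i j, A i j =
      (if i = j then 2 * ∑ k, γ (x i) (x k) * ω i * ω k else 0)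
        - 2 * γ (x i) (x j) * ω i * ω j
        + (if i = j then 2 * ∑ k, γ (x i) (xΓ k) * ω i * ωΓ k else 0)) :
    (∀ i, 0 ≤ A i i ∧ ∑ j ∈ Finset.univ.erase i, |A i j| ≤ A i i) ∧
      A.PosSemidef := by
  set W : Matrix (Fin s) (Fin s) ℝ := .of fun i j => 2 * γ (x i) (x j) * ω i * ω j
  set c : Fin s → ℝ := fun i => 2 * ∑ k, γ (x i) (xΓ k) * ω i * ωΓ k
  have hA_eq : A = laplacian W + diagonal c := by
    ext i j
    simp only [hA, laplacian, Matrix.add_apply, Matrix.sub_apply, diagonal_apply, W, c, of_apply,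
      Finset.mul_sum, mul_assoc]
  have hW : ∀ i j, 0 ≤ W i j := fun i j =>
    mul_nonneg (mul_nonneg (mul_nonneg zero_le_two (hγnonneg _ _)) (hω i)) (hω j)
  have hc : 0 ≤ c := fun i =>
    mul_nonneg zero_le_two (Finset.sum_nonneg fun k _ =>
      mul_nonneg (mul_nonneg (hγnonneg _ _) (hω i)) (hωΓ k))
  have hW_symm : W.IsSymm := IsSymm.ext fun i j => by
    simp only [W, of_apply, hγsymm (x j)]; ring
  have hdom (i) : ∑ j ∈ Finset.univ.erase i, |A i j| ≤ A i i :=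
    hA_eq ▸ sum_abs_offDiag_le_laplacian_add_diagonal hW hc i
  have hA_symm : A.IsSymm := hA_eq ▸ (isSymm_laplacian hW_symm).add (isSymm_diagonal c)
  refine ⟨fun i => ⟨(Finset.sum_nonneg fun j _ => abs_nonneg _).trans (hdom i), hdom i⟩, ?_⟩
  exact (isHermitian_iff_isSymm.mpr hA_symm).posSemidef_of_sum_norm_offDiag_le
    (by simpa only [Real.norm_eq_abs, RCLike.re_to_real] using hdom)
end

section
/- Suppose (u_ε, λ) solves the saddle point system A_{εε} u_ε + Mᵀλ = f_ε, M u_ε = 0, where A_{εε} is symmetric PSD with null space spanned by columns of Z. Then λ satisfies the reduced system P₀ K λ = P₀ e and Gᵀλ = g, where K = M A_{εε}^† Mᵀ, e = M A_{εε}^† f_ε, G = MZ, g = Zᵀ f_ε, and P₀ = I − G(GᵀG)^†Gᵀ. Conversely, if λ solves the reduced system, then u_ε = A_{εε}^†(f_ε − Mᵀλ) + Zα with α = (GᵀG)^†Gᵀ(Kλ − e) satisfies M u_ε = 0 and A_{εε} u_ε + Mᵀλ = f_ε. -/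
open Matrix

/-- `B` is the Moore–Penrose pseudoinverse of `A` (the four Penrose identities). -/
def IsMoorePenroseInv {m n : Type*} [Fintype m] [Fintype n]
    (A : Matrix m n ℝ) (B : Matrix n m ℝ) : Prop :=
  A * B * A = A ∧ B * A * B = B ∧ (A * B)ᵀ = A * B ∧ (B * A)ᵀ = B * A

/-- Uniqueness of the Moore–Penrose pseudoinverse. -/
lemma mp_unique {m n : ℕ} (A : Matrix (Fin m) (Fin n) ℝ) (B C : Matrix (Fin n) (Fin m) ℝ)
    (hB : IsMoorePenroseInv A B) (hC : IsMoorePenroseInv A C) : B = C := by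
  obtain ⟨b1, b2, b3, b4⟩ := hB
  obtain ⟨c1, c2, c3, c4⟩ := hC
  have e1 : (A * B) * (A * C) = A * C := by
    rw [← Matrix.mul_assoc, Matrix.mul_assoc (A*B) A C, ← Matrix.mul_assoc, b1]
  have e2 : (A * C) * (A * B) = A * B := by
    rw [← Matrix.mul_assoc, Matrix.mul_assoc (A*C) A B, ← Matrix.mul_assoc, c1]
  have hABAC : A * B = A * C :=
    calc A * B = (A * C) * (A * B) := e2.symm
      _ = ((A * C) * (A * B))ᵀᵀ := (transpose_transpose _).symm
      _ = ((A * B)ᵀ * (A * C)ᵀ)ᵀ := by rw [transpose_mul]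
      _ = ((A * B) * (A * C))ᵀ := by rw [b3, c3]
      _ = (A * C)ᵀ := by rw [e1]
      _ = A * C := c3
  have f1 : (B * A) * (C * A) = B * A := by
    rw [← Matrix.mul_assoc, Matrix.mul_assoc (B*A) C A, Matrix.mul_assoc B A (C*A), ← Matrix.mul_assoc A C A, c1]
  have f2 : (C * A) * (B * A) = C * A := by
    rw [← Matrix.mul_assoc, Matrix.mul_assoc (C*A) B A, Matrix.mul_assoc C A (B*A), ← Matrix.mul_assoc A B A, b1]
  have hBACA : B * A = C * A :=
    calc B * A = (B * A) * (C * A) := f1.symm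
      _ = ((B * A) * (C * A))ᵀᵀ := (transpose_transpose _).symm
      _ = ((C * A)ᵀ * (B * A)ᵀ)ᵀ := by rw [transpose_mul]
      _ = ((C * A) * (B * A))ᵀ := by rw [b4, c4]
      _ = (C * A)ᵀ := by rw [f2]
      _ = C * A := c4
  calc B = B * A * B := b2.symm
    _ = C * A * B := by rw [hBACA]
    _ = C * (A * B) := by rw [Matrix.mul_assoc]
    _ = C * (A * C) := by rw [hABAC]
    _ = C * A * C := by rw [Matrix.mul_assoc]
    _ = C := c2

/-- Auxiliary: `G (GᵀG)† (GᵀG) = G`. -/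
lemma mp_proj_aux {q z : ℕ} (G : Matrix (Fin q) (Fin z) ℝ)
    (GtGdag : Matrix (Fin z) (Fin z) ℝ)
    (hGtGdag : IsMoorePenroseInv (Gᵀ * G) GtGdag) :
    G * (GtGdag * (Gᵀ * G)) = G := by
  obtain ⟨h1, h2, h3, h4⟩ := hGtGdag
  set P : Matrix (Fin z) (Fin z) ℝ := GtGdag * (Gᵀ * G) with hP
  have hNP : (Gᵀ * G) * P = Gᵀ * G := by rw [hP, ← Matrix.mul_assoc]; exact h1
  have hPtN : Pᵀ * (Gᵀ * G) = Gᵀ * G := by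
    have := congrArg transpose hNP
    simpa [transpose_mul, Matrix.mul_assoc] using this
  have hX : (G - G * P)ᴴ * (G - G * P) = 0 := by
    rw [conjTranspose_eq_transpose_of_trivial, transpose_sub, transpose_mul,
      Matrix.sub_mul, Matrix.mul_sub, Matrix.mul_sub]
    have e1 : Gᵀ * (G * P) = Gᵀ * G := by rw [← Matrix.mul_assoc]; exact hNP
    have e2 : Pᵀ * Gᵀ * G = Gᵀ * G := by rw [Matrix.mul_assoc]; exact hPtN
    have e3 : Pᵀ * Gᵀ * (G * P) = Gᵀ * G := by
      rw [Matrix.mul_assoc, ← Matrix.mul_assoc Gᵀ, hNP]; exact hPtN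
    rw [e1, e2, e3]
    abel
  have h0 : G - G * P = 0 := conjTranspose_mul_self_eq_zero.mp hX
  have := sub_eq_zero.mp h0
  exact this.symm

/-- FETI reduction: if `(u_ε, λ)` solves the saddle point system, then `λ` solves the
reduced system `P₀Kλ = P₀e`, `Gᵀλ = g`. Conversely (with `G` of full column rank),
a solution `λ` of the reduced system yields, with `α = (GᵀG)^†Gᵀ(Kλ − e)`,
a solution `u_ε = A_εε^†(f_ε − Mᵀλ) + Zα` of the saddle point system. -/
theorem feti_reduced_system_equivalence
    {sz z q : ℕ}
    (Aεε : Matrix (Fin sz) (Fin sz) ℝ) (hA : Aεε.PosSemidef)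
    (Adag : Matrix (Fin sz) (Fin sz) ℝ) (hAdag : IsMoorePenroseInv Aεε Adag)
    (Z : Matrix (Fin sz) (Fin z) ℝ)
    (hZker : ∀ α, Aεε.mulVec (Z.mulVec α) = 0)
    (hZspan : ∀ v, Aεε.mulVec v = 0 → ∃ α, Z.mulVec α = v)
    (M : Matrix (Fin q) (Fin sz) ℝ) (fε : Fin sz → ℝ)
    (K : Matrix (Fin q) (Fin q) ℝ) (hK : K = M * Adag * Mᵀ)
    (e : Fin q → ℝ) (he : e = M.mulVec (Adag.mulVec fε))
    (G : Matrix (Fin q) (Fin z) ℝ) (hG : G = M * Z)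
    (g : Fin z → ℝ) (hg : g = Zᵀ.mulVec fε)
    (GtGdag : Matrix (Fin z) (Fin z) ℝ)
    (hGtGdag : IsMoorePenroseInv (Gᵀ * G) GtGdag)
    (P₀ : Matrix (Fin q) (Fin q) ℝ) (hP₀ : P₀ = 1 - G * GtGdag * Gᵀ) :
    (∀ (uε : Fin sz → ℝ) (lam : Fin q → ℝ),
      Aεε.mulVec uε + Mᵀ.mulVec lam = fε → M.mulVec uε = 0 →
        P₀.mulVec (K.mulVec lam) = P₀.mulVec e ∧ Gᵀ.mulVec lam = g) ∧
    ((∀ α : Fin z → ℝ, G.mulVec α = 0 → α = 0) →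
      ∀ lam : Fin q → ℝ,
        P₀.mulVec (K.mulVec lam) = P₀.mulVec e → Gᵀ.mulVec lam = g →
        ∀ uε : Fin sz → ℝ,
          uε = Adag.mulVec (fε - Mᵀ.mulVec lam)
                + Z.mulVec (GtGdag.mulVec (Gᵀ.mulVec (K.mulVec lam - e))) →
          M.mulVec uε = 0 ∧ Aεε.mulVec uε + Mᵀ.mulVec lam = fε) := by
  obtain ⟨hp1, hp2, hp3, hp4⟩ := hAdag
  have hAsymm : Aεεᵀ = Aεε := by
    rw [← conjTranspose_eq_transpose_of_trivial]; exact hA.1.eq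
  -- transpose of Adag is also a Moore-Penrose inverse, hence Adag is symmetric
  have hT : IsMoorePenroseInv Aεε Adagᵀ := by
    refine ⟨?_, ?_, ?_, ?_⟩
    · have := congrArg transpose hp1
      simp only [transpose_mul, hAsymm] at this
      rw [Matrix.mul_assoc]; exact this
    · have := congrArg transpose hp2
      simp only [transpose_mul, hAsymm, transpose_transpose] at this
      rw [Matrix.mul_assoc]; exact this
    · rw [transpose_mul, transpose_transpose]
      have h1 : Aεε * Adagᵀ = (Adag * Aεε)ᵀ := by rw [transpose_mul, hAsymm]
      rw [h1, hp4, hAsymm]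
    · rw [transpose_mul, transpose_transpose]
      have h1 : Adagᵀ * Aεε = (Aεε * Adag)ᵀ := by rw [transpose_mul, hAsymm]
      rw [h1, hp3, hAsymm]
  have hAdagSymm : Adagᵀ = Adag := mp_unique Aεε Adagᵀ Adag hT ⟨hp1, hp2, hp3, hp4⟩
  have hcomm : Aεε * Adag = Adag * Aεε := by
    calc Aεε * Adag = (Aεε * Adag)ᵀ := hp3.symm
      _ = Adagᵀ * Aεεᵀ := transpose_mul _ _
      _ = Adag * Aεε := by rw [hAdagSymm, hAsymm]
  have hAAA : Aεε * (Aεε * Adag) = Aεε := by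
    rw [hcomm, ← Matrix.mul_assoc]; exact hp1
  -- Aεε * Z = 0 as a matrix
  have hAZ : Aεε * Z = 0 := by
    ext i j
    have h := congr_fun (hZker (Pi.single j 1)) i
    rw [mulVec_mulVec, mulVec_single_one] at h
    simpa using h
  have hZA : Zᵀ * Aεε = 0 := by
    have := congrArg transpose hAZ
    rwa [transpose_mul, hAsymm, transpose_zero] at this
  -- G * GtGdag * Gᵀ * G = G
  have hGP : G * GtGdag * Gᵀ * G = G := by
    have h := mp_proj_aux G GtGdag hGtGdag
    rw [Matrix.mul_assoc, Matrix.mul_assoc]; exact h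
  have hP₀G : P₀ * G = 0 := by
    rw [hP₀, Matrix.sub_mul, Matrix.one_mul, hGP, sub_self]
  -- common computation: M Adag (fε - Mᵀ lam) = e - K lam
  have hMAd : ∀ lam : Fin q → ℝ,
      M.mulVec (Adag.mulVec (fε - Mᵀ.mulVec lam)) = e - K.mulVec lam := by
    intro lam
    rw [mulVec_sub, mulVec_sub, ← he, mulVec_mulVec, mulVec_mulVec, ← hK]
  constructor
  · -- forward direction
    intro u lam h1 h2
    have hAu : Aεε.mulVec u = fε - Mᵀ.mulVec lam := eq_sub_of_add_eq h1
    have hres : Aεε.mulVec (u - Adag.mulVec (fε - Mᵀ.mulVec lam)) = 0 := by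
      rw [mulVec_sub, ← hAu, mulVec_mulVec, mulVec_mulVec, hp1, sub_self]
    obtain ⟨β, hβ⟩ := hZspan _ hres
    have hu : u = Adag.mulVec (fε - Mᵀ.mulVec lam) + Z.mulVec β := by
      rw [hβ]; abel
    have h2' : e - K.mulVec lam + G.mulVec β = 0 := by
      rw [← h2, hu, mulVec_add, hMAd, mulVec_mulVec, ← hG]
    have hMu : K.mulVec lam - e = G.mulVec β := by
      linear_combination (norm := module) -h2'
    refine ⟨?_, ?_⟩
    · have hz : P₀.mulVec (K.mulVec lam - e) = 0 := by
        rw [hMu, mulVec_mulVec, hP₀G, zero_mulVec]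
      rw [mulVec_sub] at hz
      linear_combination (norm := module) hz
    · have hGt2 : Gᵀ = Zᵀ * Mᵀ := by rw [hG, transpose_mul]
      have hMl : Mᵀ.mulVec lam = fε - Aεε.mulVec u := by rw [← h1]; abel
      rw [hGt2, ← mulVec_mulVec, hMl, mulVec_sub, mulVec_mulVec, hZA, zero_mulVec,
        ← hg, sub_zero]
  · -- converse
    intro _ lam hred hGt u hu
    have hproj : (G * GtGdag * Gᵀ).mulVec (K.mulVec lam - e) = K.mulVec lam - e := by
      have h0 : P₀.mulVec (K.mulVec lam - e) = 0 := by
        rw [mulVec_sub, hred, sub_self]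
      rw [hP₀, sub_mulVec, one_mulVec] at h0
      linear_combination (norm := module) -h0
    have hGα : G.mulVec (GtGdag.mulVec (Gᵀ.mulVec (K.mulVec lam - e)))
        = K.mulVec lam - e := by
      rw [mulVec_mulVec, mulVec_mulVec, hproj]
    have hMu0 : M.mulVec u = 0 := by
      rw [hu, mulVec_add, hMAd, mulVec_mulVec, ← hG, hGα]
      abel
    refine ⟨hMu0, ?_⟩
    have hZw : Zᵀ.mulVec (fε - Mᵀ.mulVec lam) = 0 := by
      have hZM : Zᵀ * Mᵀ = Gᵀ := by rw [hG, transpose_mul]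
      rw [mulVec_sub, mulVec_mulVec, hZM, hGt, ← hg, sub_self]
    have hAv : Aεε.mulVec ((fε - Mᵀ.mulVec lam)
        - (Aεε * Adag).mulVec (fε - Mᵀ.mulVec lam)) = 0 := by
      rw [mulVec_sub, mulVec_mulVec, hAAA, sub_self]
    obtain ⟨β, hβ⟩ := hZspan _ hAv
    have hZβ0 : Z.mulVec β = 0 := by
      apply (conjTranspose_mul_self_mulVec_eq_zero Z β).mp
      rw [conjTranspose_eq_transpose_of_trivial, ← mulVec_mulVec, hβ, mulVec_sub, hZw,
        mulVec_mulVec, ← Matrix.mul_assoc, hZA, Matrix.zero_mul, zero_mulVec, sub_self]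
    have hAAw : (Aεε * Adag).mulVec (fε - Mᵀ.mulVec lam) = fε - Mᵀ.mulVec lam := by
      rw [hZβ0] at hβ
      exact (sub_eq_zero.mp hβ.symm).symm
    rw [hu, mulVec_add, hZker, add_zero, mulVec_mulVec, hAAw]
    abel
end
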